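/- Let H = ⟨a, b, c | a^{2^n} = 1, b^{2^m} = a^{2^m}, c^{2^ℓ} = 1, [b,a] = c, [c,a] = c^{-2}, [c,b] = c^{-2}⟩ with n ≥ m > ℓ ≥ 2, and let F be a field of characteristic 2. Then in FH the set {ab, abc} is a conjugacy class of H, so the element ab + abc is central in FH; consequently the element y² = b² + a² + ab + abc + 1, where y = b + a + 1, is central in FH. -/

import Mathlib

open FreeGroup in
/-- Relators of H = ⟨a,b,c | a^{2^n}=1, b^{2^m}=a^{2^m}, c^{2^ℓ}=1, [b,a]=c, [c,a]=c⁻²,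
[c,b]=c⁻²⟩ (convention [b,a] = b⁻¹a⁻¹ba; generators 0 ↦ a, 1 ↦ b, 2 ↦ c). -/
def relsH2 (n m ℓ : ℕ) : Set (FreeGroup (Fin 3)) :=
  { (of 0) ^ (2 ^ n), (of 1) ^ (2 ^ m) * ((of 0) ^ (2 ^ m))⁻¹, (of 2) ^ (2 ^ ℓ),
    (of 1)⁻¹ * (of 0)⁻¹ * of 1 * of 0 * (of 2)⁻¹,
    (of 2)⁻¹ * (of 0)⁻¹ * of 2 * of 0 * (of 2) ^ 2,
    (of 2)⁻¹ * (of 1)⁻¹ * of 2 * of 1 * (of 2) ^ 2 }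

abbrev H2 (n m ℓ : ℕ) := PresentedGroup (relsH2 n m ℓ)

/-- The generator a of H. -/
def ga (n m ℓ : ℕ) : H2 n m ℓ := PresentedGroup.of 0
/-- The generator b of H. -/
def gb (n m ℓ : ℕ) : H2 n m ℓ := PresentedGroup.of 1
/-- The generator c of H. -/
def gc (n m ℓ : ℕ) : H2 n m ℓ := PresentedGroup.of 2

/-!
Conjugation by `a` and by `b` swaps `ab` and `abc`, while `c` commutes with `ab`. As `a, b, c`
generate `H`, the pair `{ab, abc}` is stable under conjugation, so it is the conjugacy class of
`ab`, and `ab + abc` commutes with every group element, hence with all of `FH`. In characteristic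
2, `(b + a + 1)² = b² + a² + ab + ba + 1` with `ba = abc`, and `a²`, `b²` are central in `H`
because conjugation by `a` or `b` inverts `c`.
-/

open ConjAct Pointwise

section Generators

variable {G : Type*} [Group G] {T : Set G}

theorem ConjAct.toConjAct_smul_pair (g x y : G) :
    toConjAct g • ({x, y} : Set G) = {g * x * g⁻¹, g * y * g⁻¹} := by
  rw [Set.smul_set_insert, Set.smul_set_singleton, toConjAct_smul, toConjAct_smul]

theorem setOf_isConj_subset_of_closure_eq_top (hT : Subgroup.closure T = ⊤) {S : Set G}
    (hS : ∀ t ∈ T, toConjAct t • S = S) {x : G} (hx : x ∈ S) : {y | IsConj x y} ⊆ S := by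
  have hstab : Subgroup.closure T ≤
      (MulAction.stabilizer (ConjAct G) S).comap toConjAct.toMonoidHom :=
    (Subgroup.closure_le _).2 hS
  rintro _ hy
  obtain ⟨g, rfl⟩ := isConj_iff.mp hy
  have hg : toConjAct g • S = S := hstab (hT ▸ Subgroup.mem_top g)
  rw [← hg]
  exact ⟨x, hx, toConjAct_smul g x⟩

theorem MonoidAlgebra.commute_of_closure_eq_top {k : Type*} [CommSemiring k]
    (hT : Subgroup.closure T = ⊤) {z : MonoidAlgebra k G}
    (hz : ∀ t ∈ T, Commute z (of k G t)) (u : MonoidAlgebra k G) : Commute z u := by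
  have hG (g : G) : Commute z (of k G g) := by
    induction (hT ▸ Subgroup.mem_top g : g ∈ Subgroup.closure T)
      using Subgroup.closure_induction with
    | mem t ht => exact hz t ht
    | one => exact (map_one (of k G)).symm ▸ Commute.one_right z
    | mul g h _ _ hg hh => simpa using hg.mul_right hh
    | inv g _ hg => simpa using hg.units_inv_right (u := (toUnits g).map (of k G))
  induction u using MonoidAlgebra.induction_on with
  | of g => exact hG g
  | add u v hu hv => exact hu.add_right hv
  | smul r u hu => exact hu.smul_right r

end Generators

theorem add_add_one_sq_of_two_eq_zero {R : Type*} [Semiring R] (h2 : (2 : R) = 0) (x y : R) :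
    (x + y + 1) ^ 2 = x ^ 2 + y ^ 2 + y * x + x * y + 1 := by
  have h : (x + y + 1) ^ 2 = x ^ 2 + y ^ 2 + y * x + x * y + 1 + 2 * (x + y) := by
    simp only [sq, add_mul, mul_add, two_mul, mul_one, one_mul]
    abel
  rw [h, h2, zero_mul, add_zero]

section Relations

variable {G : Type*} [Group G] {a b c : G}

theorem mul_eq_mul_inv_of_mul_sq_eq_one {x : G} (h : c⁻¹ * x⁻¹ * c * x * c ^ 2 = 1) :
    c * x = x * c⁻¹ :=
  calc c * x = x * c⁻¹ * (c ^ 2 * (c⁻¹ * x⁻¹ * c * x * c ^ 2) * (c ^ 2)⁻¹) := by group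
    _ = x * c⁻¹ := by rw [h]; group

theorem commute_sq_of_mul_eq_mul_inv {x : G} (h : c * x = x * c⁻¹) : Commute (x ^ 2) c := by
  have hx : SemiconjBy x c⁻¹ c := h.symm
  have hx' : SemiconjBy x c c⁻¹ := by simpa using hx.inv_right
  rw [pow_two]
  exact hx.mul_left hx'

theorem commute_mul_of_mul_eq_mul_inv (ha : c * a = a * c⁻¹) (hb : c * b = b * c⁻¹) :
    Commute c (a * b) := by
  have ha' : SemiconjBy a c⁻¹ c := ha.symm
  have hb' : SemiconjBy b c c⁻¹ := by simpa using (SemiconjBy.inv_right hb.symm)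
  exact (ha'.mul_left hb').symm

theorem semiconjBy_a_ab (hba : b * a = a * b * c) (hca : c * a = a * c⁻¹) :
    SemiconjBy a (a * b) (a * b * c) := by
  rw [SemiconjBy, mul_assoc (a * b), hca, ← mul_assoc, ← mul_assoc, mul_assoc a b a, hba]
  group

theorem semiconjBy_a_abc (hba : b * a = a * b * c) : SemiconjBy a (a * b * c) (a * b) := by
  rw [SemiconjBy, mul_assoc a b a, hba]

theorem semiconjBy_b_ab (hba : b * a = a * b * c) : SemiconjBy b (a * b) (a * b * c) := by
  rw [SemiconjBy, ← mul_assoc, hba]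

theorem semiconjBy_b_abc (hba : b * a = a * b * c) (hcb : c * b = b * c⁻¹) :
    SemiconjBy b (a * b * c) (a * b) := by
  rw [SemiconjBy, ← mul_assoc, ← mul_assoc, hba, mul_assoc (a * b) c b, hcb]
  group

theorem commute_sq_a_b (hba : b * a = a * b * c) (hca : c * a = a * c⁻¹) :
    Commute (a ^ 2) b := by
  rw [Commute, SemiconjBy, pow_two, ← mul_assoc b, hba, ← semiconjBy_a_ab hba hca, mul_assoc]

theorem commute_sq_b_a (hba : b * a = a * b * c) (hcb : c * b = b * c⁻¹) :
    Commute (b ^ 2) a := by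
  rw [Commute, SemiconjBy, pow_two, mul_assoc, hba, semiconjBy_b_abc hba hcb, mul_assoc]

theorem MonoidAlgebra.sq_of_b_add_of_a_add_one {k : Type*} [CommSemiring k] [CharP k 2]
    (hba : b * a = a * b * c) :
    (of k G b + of k G a + 1) ^ 2 =
      of k G (b ^ 2) + of k G (a ^ 2) + of k G (a * b) + of k G (a * b * c) + 1 := by
  have h2 : (2 : MonoidAlgebra k G) = 0 := by
    rw [← map_ofNat (algebraMap k (MonoidAlgebra k G)) 2, CharTwo.two_eq_zero, map_zero]
  rw [add_add_one_sq_of_two_eq_zero h2, ← map_pow, ← map_pow, ← map_mul, ← map_mul, hba]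

variable (hgen : Subgroup.closure {a, b, c} = ⊤)
  (hba : b * a = a * b * c) (hca : c * a = a * c⁻¹) (hcb : c * b = b * c⁻¹)
include hgen hba hca hcb

theorem setOf_isConj_ab_eq_pair : {h | IsConj (a * b) h} = {a * b, a * b * c} := by
  refine (setOf_isConj_subset_of_closure_eq_top hgen ?_ (Set.mem_insert _ _)).antisymm ?_
  · simp only [Set.forall_mem_insert, Set.mem_singleton_iff, forall_eq,
      ConjAct.toConjAct_smul_pair]
    have hc := commute_mul_of_mul_eq_mul_inv hca hcb
    refine ⟨?_, ?_, ?_⟩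
    · rw [mul_inv_eq_of_eq_mul (semiconjBy_a_ab hba hca),
        mul_inv_eq_of_eq_mul (semiconjBy_a_abc hba), Set.pair_comm]
    · rw [mul_inv_eq_of_eq_mul (semiconjBy_b_ab hba),
        mul_inv_eq_of_eq_mul (semiconjBy_b_abc hba hcb), Set.pair_comm]
    · rw [mul_inv_eq_of_eq_mul hc, mul_inv_eq_of_eq_mul (hc.mul_right (Commute.refl c))]
  · rintro _ (rfl | rfl)
    exacts [IsConj.refl _, isConj_iff.mpr ⟨a, mul_inv_eq_of_eq_mul (semiconjBy_a_ab hba hca)⟩]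

namespace MonoidAlgebra

variable {k : Type*} [CommSemiring k]

theorem commute_of_ab_add_of_abc (u : MonoidAlgebra k G) :
    Commute (of k G (a * b) + of k G (a * b * c)) u := by
  have swap {t : G} (h₁ : SemiconjBy t (a * b) (a * b * c))
      (h₂ : SemiconjBy t (a * b * c) (a * b)) :
      Commute (of k G (a * b) + of k G (a * b * c)) (of k G t) := by
    have h := (h₁.map (of k G)).add_right (h₂.map (of k G))
    rw [add_comm (of k G (a * b * c))] at h
    exact h.symm
  have hc := commute_mul_of_mul_eq_mul_inv hca hcb
  refine commute_of_closure_eq_top hgen ?_ u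
  simp only [Set.forall_mem_insert, Set.mem_singleton_iff, forall_eq]
  refine ⟨swap (semiconjBy_a_ab hba hca) (semiconjBy_a_abc hba),
    swap (semiconjBy_b_ab hba) (semiconjBy_b_abc hba hcb), ?_⟩
  exact ((hc.map (of k G)).add_right ((hc.mul_right (Commute.refl c)).map (of k G))).symm

theorem commute_sq_of_b_add_of_a_add_one [CharP k 2] (u : MonoidAlgebra k G) :
    Commute ((of k G b + of k G a + 1) ^ 2) u := by
  have hsq : Commute (of k G (b ^ 2) + of k G (a ^ 2)) u := by
    refine commute_of_closure_eq_top hgen ?_ u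
    simp only [Set.forall_mem_insert, Set.mem_singleton_iff, forall_eq]
    refine ⟨?_, ?_, ?_⟩
    · exact ((commute_sq_b_a hba hcb).map _).add_left (((Commute.refl a).pow_left 2).map _)
    · exact (((Commute.refl b).pow_left 2).map _).add_left ((commute_sq_a_b hba hca).map _)
    · exact ((commute_sq_of_mul_eq_mul_inv hcb).map _).add_left
        ((commute_sq_of_mul_eq_mul_inv hca).map _)
  rw [sq_of_b_add_of_a_add_one hba, add_assoc (of k G (b ^ 2) + of k G (a ^ 2))]
  exact (hsq.add_left (commute_of_ab_add_of_abc hgen hba hca hcb u)).add_left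
    (Commute.one_left u)

end MonoidAlgebra

end Relations

namespace H2

variable {n m ℓ : ℕ}

theorem closure_ga_gb_gc : Subgroup.closure {ga n m ℓ, gb n m ℓ, gc n m ℓ} = ⊤ := by
  rw [← PresentedGroup.closure_range_of]
  congr 1
  ext
  simp [Fin.exists_fin_succ, ga, gb, gc, eq_comm]

theorem gb_mul_ga : gb n m ℓ * ga n m ℓ = ga n m ℓ * gb n m ℓ * gc n m ℓ := by
  have h : (gb n m ℓ)⁻¹ * (ga n m ℓ)⁻¹ * gb n m ℓ * ga n m ℓ * (gc n m ℓ)⁻¹ = 1 :=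
    PresentedGroup.one_of_mem (x := (FreeGroup.of 1)⁻¹ * (FreeGroup.of 0)⁻¹ * FreeGroup.of 1 *
      FreeGroup.of 0 * (FreeGroup.of 2)⁻¹) (by simp [relsH2])
  rw [mul_inv_eq_one] at h
  rw [← h]
  group

theorem gc_mul_ga : gc n m ℓ * ga n m ℓ = ga n m ℓ * (gc n m ℓ)⁻¹ :=
  mul_eq_mul_inv_of_mul_sq_eq_one <| PresentedGroup.one_of_mem
    (x := (FreeGroup.of 2)⁻¹ * (FreeGroup.of 0)⁻¹ * FreeGroup.of 2 * FreeGroup.of 0 *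
      FreeGroup.of 2 ^ 2) (by simp [relsH2])

theorem gc_mul_gb : gc n m ℓ * gb n m ℓ = gb n m ℓ * (gc n m ℓ)⁻¹ :=
  mul_eq_mul_inv_of_mul_sq_eq_one <| PresentedGroup.one_of_mem
    (x := (FreeGroup.of 2)⁻¹ * (FreeGroup.of 1)⁻¹ * FreeGroup.of 2 * FreeGroup.of 1 *
      FreeGroup.of 2 ^ 2) (by simp [relsH2])

end H2

theorem stmt8_general (n m ℓ : ℕ)
    (F : Type*) [Field F] [CharP F 2] :
    ({h : H2 n m ℓ | IsConj (ga n m ℓ * gb n m ℓ) h} =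
      {ga n m ℓ * gb n m ℓ, ga n m ℓ * gb n m ℓ * gc n m ℓ}) ∧
    (∀ u : MonoidAlgebra F (H2 n m ℓ),
      (MonoidAlgebra.of F (H2 n m ℓ) (ga n m ℓ * gb n m ℓ) +
        MonoidAlgebra.of F (H2 n m ℓ) (ga n m ℓ * gb n m ℓ * gc n m ℓ)) * u =
      u * (MonoidAlgebra.of F (H2 n m ℓ) (ga n m ℓ * gb n m ℓ) +
        MonoidAlgebra.of F (H2 n m ℓ) (ga n m ℓ * gb n m ℓ * gc n m ℓ))) ∧
    ((MonoidAlgebra.of F (H2 n m ℓ) (gb n m ℓ) + MonoidAlgebra.of F (H2 n m ℓ) (ga n m ℓ)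
        + 1) ^ 2 =
      MonoidAlgebra.of F (H2 n m ℓ) (gb n m ℓ ^ 2) +
        MonoidAlgebra.of F (H2 n m ℓ) (ga n m ℓ ^ 2) +
        MonoidAlgebra.of F (H2 n m ℓ) (ga n m ℓ * gb n m ℓ) +
        MonoidAlgebra.of F (H2 n m ℓ) (ga n m ℓ * gb n m ℓ * gc n m ℓ) + 1) ∧
    (∀ u : MonoidAlgebra F (H2 n m ℓ),
      ((MonoidAlgebra.of F (H2 n m ℓ) (gb n m ℓ) + MonoidAlgebra.of F (H2 n m ℓ) (ga n m ℓ)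
        + 1) ^ 2) * u =
      u * (MonoidAlgebra.of F (H2 n m ℓ) (gb n m ℓ) + MonoidAlgebra.of F (H2 n m ℓ) (ga n m ℓ)
        + 1) ^ 2) := by
  have hgen := H2.closure_ga_gb_gc (n := n) (m := m) (ℓ := ℓ)
  have hba := H2.gb_mul_ga (n := n) (m := m) (ℓ := ℓ)
  have hca := H2.gc_mul_ga (n := n) (m := m) (ℓ := ℓ)
  have hcb := H2.gc_mul_gb (n := n) (m := m) (ℓ := ℓ)
  exact ⟨setOf_isConj_ab_eq_pair hgen hba hca hcb,
    MonoidAlgebra.commute_of_ab_add_of_abc hgen hba hca hcb,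
    MonoidAlgebra.sq_of_b_add_of_a_add_one hba,
    MonoidAlgebra.commute_sq_of_b_add_of_a_add_one hgen hba hca hcb⟩

/-- For n ≥ m > ℓ ≥ 2 and F of characteristic 2: {ab, abc} is a conjugacy
class of H, the class sum ab + abc is central in FH, and consequently
y² = b² + a² + ab + abc + 1 is central in FH, where y = b + a + 1. -/
theorem stmt8 (n m ℓ : ℕ) (hℓ : 2 ≤ ℓ) (hmℓ : ℓ < m) (hnm : m ≤ n)
    (F : Type*) [Field F] [CharP F 2] :
    ({h : H2 n m ℓ | IsConj (ga n m ℓ * gb n m ℓ) h} =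
      {ga n m ℓ * gb n m ℓ, ga n m ℓ * gb n m ℓ * gc n m ℓ}) ∧
    (∀ u : MonoidAlgebra F (H2 n m ℓ),
      (MonoidAlgebra.of F (H2 n m ℓ) (ga n m ℓ * gb n m ℓ) +
        MonoidAlgebra.of F (H2 n m ℓ) (ga n m ℓ * gb n m ℓ * gc n m ℓ)) * u =
      u * (MonoidAlgebra.of F (H2 n m ℓ) (ga n m ℓ * gb n m ℓ) +
        MonoidAlgebra.of F (H2 n m ℓ) (ga n m ℓ * gb n m ℓ * gc n m ℓ))) ∧
    ((MonoidAlgebra.of F (H2 n m ℓ) (gb n m ℓ) + MonoidAlgebra.of F (H2 n m ℓ) (ga n m ℓ)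
        + 1) ^ 2 =
      MonoidAlgebra.of F (H2 n m ℓ) (gb n m ℓ ^ 2) +
        MonoidAlgebra.of F (H2 n m ℓ) (ga n m ℓ ^ 2) +
        MonoidAlgebra.of F (H2 n m ℓ) (ga n m ℓ * gb n m ℓ) +
        MonoidAlgebra.of F (H2 n m ℓ) (ga n m ℓ * gb n m ℓ * gc n m ℓ) + 1) ∧
    (∀ u : MonoidAlgebra F (H2 n m ℓ),
      ((MonoidAlgebra.of F (H2 n m ℓ) (gb n m ℓ) + MonoidAlgebra.of F (H2 n m ℓ) (ga n m ℓ)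
        + 1) ^ 2) * u =
      u * (MonoidAlgebra.of F (H2 n m ℓ) (gb n m ℓ) + MonoidAlgebra.of F (H2 n m ℓ) (ga n m ℓ)
        + 1) ^ 2) :=
  stmt8_general n m ℓ F
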